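/- Let A = {x ∈ S^d : δ(x,a) ≤ r} be a spherical cap centered at a ∈ S^d with radius r ∈ [0,π], and let u be a unit vector with u·O ≠ 0 and σ_u(a) ≠ a. Then the polarization of A is the spherical cap of the same radius centered at τ_u(a): S_u A = {x ∈ S^d : δ(x, τ_u(a)) ≤ r}, where τ_u(a) = a if δ(a,O) ≤ δ(σ_u(a),O) and τ_u(a) = σ_u(a) otherwise. -/

import Mathlib

open MeasureTheory Filter Real
open scoped ENNReal symmDiff BigOperators

noncomputable section

/-- Euclidean space `ℝ^{d+1}`. -/
abbrev Esp (d : ℕ) : Type := EuclideanSpace ℝ (Fin (d + 1))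

/-- The unit sphere `𝕊^d ⊆ ℝ^{d+1}`, as a set. -/
def sph (d : ℕ) : Set (Esp d) := Metric.sphere 0 1

/-- The north pole `O`. -/
def npole (d : ℕ) : Esp d := EuclideanSpace.single 0 1

/-- Geodesic distance `δ(x,y) = arccos (x ⬝ y)` on the sphere. -/
def gdist {d : ℕ} (x y : Esp d) : ℝ := Real.arccos (inner ℝ x y : ℝ)

/-- The reflection `σ_u (x) = x - 2 (u ⬝ x) u`. -/
def reflect {d : ℕ} (u x : Esp d) : Esp d := x - (2 * (inner ℝ u x : ℝ)) • u

/-- The polarization `S_u A` of a set `A` with respect to the reflection `σ_u`. -/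
def polarize {d : ℕ} (u : Esp d) (A : Set (Esp d)) : Set (Esp d) :=
  {x | if gdist x (npole d) ≤ gdist (reflect u x) (npole d)
       then x ∈ A ∨ reflect u x ∈ A
       else x ∈ A ∧ reflect u x ∈ A}

/-- `μ` is the uniform (rotation-invariant) Borel probability measure on `𝕊^d`:
it is a probability measure carried by the sphere that is invariant under every
linear isometry of `ℝ^{d+1}`. -/
def IsUniformSphere (d : ℕ) (μ : Measure (Esp d)) : Prop :=
  μ Set.univ = 1 ∧ μ (sph d)ᶜ = 0 ∧
    ∀ g : Esp d ≃ₗᵢ[ℝ] Esp d, μ.map ⇑g = μ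

/-- The polar cap of geodesic radius `r` centered at the north pole. -/
def cap (d : ℕ) (r : ℝ) : Set (Esp d) := {x ∈ sph d | gdist x (npole d) ≤ r}

/-- Iterated polarization: `polarizeSeq us A n = S_{u_{n-1}} ∘ ⋯ ∘ S_{u_0} A`. -/
def polarizeSeq {d : ℕ} (us : ℕ → Esp d) (A : Set (Esp d)) : ℕ → Set (Esp d)
  | 0 => A
  | n + 1 => polarize (us n) (polarizeSeq us A n)

/-- The compression `τ_u` associated with the reflection `σ_u`. -/
def compress {d : ℕ} (u x : Esp d) : Esp d :=
  if gdist x (npole d) ≤ gdist (reflect u x) (npole d) then x else reflect u x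

/-- Iterated compression: `compressSeq us x n = τ_{u_{n-1}} ∘ ⋯ ∘ τ_{u_0} x`. -/
def compressSeq {d : ℕ} (us : ℕ → Esp d) (x : Esp d) : ℕ → Esp d
  | 0 => x
  | n + 1 => compress (us n) (compressSeq us x n)

/-! The geodesic distance turns the reflection `σ_u` into a sign test: for unit vectors,
`δ(x, y) ≤ δ(σ_u x, y)` exactly when `x` and `y` lie on the same side of the hyperplane `u⊥`.
Every point closer to `O` than its mirror image lies on the side of `O`, as does `τ_u(a)`,
so the cap around `τ_u(a)` is already polarized; and the cap around `a` has the same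
polarization, being either that cap or its mirror image. -/

section Reflection

variable {d : ℕ}

lemma inner_reflect_left (u x y : Esp d) :
    inner ℝ (reflect u x) y = inner ℝ x y - 2 * inner ℝ u x * inner ℝ u y := by
  simp only [reflect, inner_sub_left, real_inner_smul_left]

lemma inner_reflect_right (u x y : Esp d) :
    inner ℝ x (reflect u y) = inner ℝ x y - 2 * inner ℝ u x * inner ℝ u y := by
  rw [real_inner_comm, inner_reflect_left, real_inner_comm x y]
  ring

lemma reflect_reflect {u : Esp d} (hu : ‖u‖ = 1) (x : Esp d) : reflect u (reflect u x) = x := by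
  rw [reflect, inner_reflect_right, real_inner_self_eq_norm_sq, hu, reflect]
  module

lemma norm_reflect {u : Esp d} (hu : ‖u‖ = 1) (x : Esp d) : ‖reflect u x‖ = ‖x‖ := by
  rw [← sq_eq_sq₀ (norm_nonneg _) (norm_nonneg _), ← real_inner_self_eq_norm_sq,
    ← real_inner_self_eq_norm_sq, inner_reflect_left, inner_reflect_right, inner_reflect_right,
    real_inner_self_eq_norm_sq u, hu]
  ring

lemma reflect_mem_sph {u : Esp d} (hu : ‖u‖ = 1) {x : Esp d} :
    reflect u x ∈ sph d ↔ x ∈ sph d := by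
  simp only [sph, mem_sphere_zero_iff_norm, norm_reflect hu]

lemma inner_mem_Icc_of_mem_sph {x y : Esp d} (hx : x ∈ sph d) (hy : y ∈ sph d) :
    inner ℝ x y ∈ Set.Icc (-1 : ℝ) 1 := by
  rw [sph, mem_sphere_zero_iff_norm] at hx hy
  simpa [← abs_le, hx, hy] using abs_real_inner_le_norm x y

lemma gdist_reflect_left (u x y : Esp d) : gdist (reflect u x) y = gdist x (reflect u y) := by
  rw [gdist, gdist, inner_reflect_left, inner_reflect_right]

lemma gdist_le_gdist_reflect_iff {u : Esp d} (hu : ‖u‖ = 1) {x y : Esp d} (hx : x ∈ sph d)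
    (hy : y ∈ sph d) : gdist x y ≤ gdist (reflect u x) y ↔ 0 ≤ inner ℝ u x * inner ℝ u y := by
  refine ⟨fun h => ?_, fun h => arccos_le_arccos ?_⟩
  · by_contra! hneg
    refine h.not_gt (arccos_lt_arccos (inner_mem_Icc_of_mem_sph hx hy).1 ?_
      (inner_mem_Icc_of_mem_sph ((reflect_mem_sph hu).2 hx) hy).2)
    rw [inner_reflect_left]
    linarith
  · rw [inner_reflect_left]
    linarith

end Reflection

section Polarization

variable {d : ℕ} {u : Esp d}

lemma polarize_preimage_reflect (hu : ‖u‖ = 1) (A : Set (Esp d)) :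
    polarize u (reflect u ⁻¹' A) = polarize u A := by
  ext x
  simp only [polarize, Set.mem_ofPred_eq, Set.mem_preimage, reflect_reflect hu, or_comm, and_comm]

lemma polarize_eq_self (hu : ‖u‖ = 1) {A : Set (Esp d)}
    (hA : ∀ x, gdist x (npole d) ≤ gdist (reflect u x) (npole d) → reflect u x ∈ A → x ∈ A) :
    polarize u A = A := by
  ext x
  simp only [polarize, Set.mem_ofPred_eq]
  split_ifs with hx
  · exact ⟨fun h => h.elim id (hA x hx), Or.inl⟩
  · refine ⟨And.left, fun h => ⟨h, hA (reflect u x) ?_ (by rwa [reflect_reflect hu])⟩⟩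
    rw [reflect_reflect hu]
    exact (not_le.1 hx).le

lemma preimage_reflect_sph_gdist_le (hu : ‖u‖ = 1) (a : Esp d) (r : ℝ) :
    reflect u ⁻¹' {x ∈ sph d | gdist x (reflect u a) ≤ r} = {x ∈ sph d | gdist x a ≤ r} := by
  ext x
  simp only [Set.mem_preimage, Set.mem_ofPred_eq, reflect_mem_sph hu, gdist_reflect_left,
    reflect_reflect hu]

lemma polarize_sph_gdist_le_of_closer (hu : ‖u‖ = 1) (huO : inner ℝ u (npole d) ≠ (0 : ℝ))
    {a : Esp d} (ha : a ∈ sph d) (haO : gdist a (npole d) ≤ gdist (reflect u a) (npole d))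
    (r : ℝ) : polarize u {x ∈ sph d | gdist x a ≤ r} = {x ∈ sph d | gdist x a ≤ r} := by
  have hO : npole d ∈ sph d := by simp [sph, npole]
  refine polarize_eq_self hu fun x hxO ⟨hσx, hσxa⟩ => ?_
  have hx := (reflect_mem_sph hu).1 hσx
  have hxO' := (gdist_le_gdist_reflect_iff hu hx hO).1 hxO
  have haO' := (gdist_le_gdist_reflect_iff hu ha hO).1 haO
  have hxa : 0 ≤ inner ℝ u x * inner ℝ u a := by nlinarith [mul_self_pos.2 huO]
  exact ⟨hx, ((gdist_le_gdist_reflect_iff hu hx ha).2 hxa).trans hσxa⟩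

end Polarization

theorem polarize_cap_eq_cap_compress_general {d : ℕ} (a : Esp d) (ha : a ∈ sph d)
    (u : Esp d) (hu : ‖u‖ = 1) (huO : (inner ℝ u (npole d) : ℝ) ≠ 0)
    (r : ℝ) :
    polarize u {x ∈ sph d | gdist x a ≤ r} =
      {x ∈ sph d | gdist x (compress u a) ≤ r} := by
  unfold compress
  split_ifs with haO
  · exact polarize_sph_gdist_le_of_closer hu huO ha haO r
  · have hσaO : gdist (reflect u a) (npole d) ≤ gdist (reflect u (reflect u a)) (npole d) := by
      rw [reflect_reflect hu]
      exact (not_le.1 haO).le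
    rw [← preimage_reflect_sph_gdist_le hu a r, polarize_preimage_reflect hu]
    exact polarize_sph_gdist_le_of_closer hu huO ((reflect_mem_sph hu).2 ha) hσaO r

/-- Polarization maps the spherical cap of radius `r` centered at `a`
to the spherical cap of the same radius centered at the compression `τ_u(a)`. -/
theorem polarize_cap_eq_cap_compress {d : ℕ} (a : Esp d) (ha : a ∈ sph d)
    (u : Esp d) (hu : ‖u‖ = 1) (huO : (inner ℝ u (npole d) : ℝ) ≠ 0)
    (hfix : reflect u a ≠ a) (r : ℝ) (hr : r ∈ Set.Icc 0 π) :
    polarize u {x ∈ sph d | gdist x a ≤ r} =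
      {x ∈ sph d | gdist x (compress u a) ≤ r} :=
  polarize_cap_eq_cap_compress_general a ha u hu huO r
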